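/- arXiv:1808.05551 — 6 statements merged into one kernel-verified Lean document; each statement's English description precedes it below -/
import Mathlib

section
/- For a positive integer n and f : Fin n → Fin n, the following are equivalent: (i) there exists a permutation σ of Fin n such that the set {|σ(f(i)) - σ(i)| : i ∈ Fin n} has cardinality n; (ii) there exist permutations σ, γ of Fin n and p : Fin n → {0,1} such that for all i ∈ Fin n, f(i) = σ(σ⁻¹(i) + (-1)^(p(σ⁻¹(i))) · γ(σ⁻¹(i))), where the arithmetic is over the integers and the result lies in Fin n. -/
/-- `G_f` is graceful (some relabeling `σ` makes all induced subtractive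
edge labels distinct) iff `f` admits a graceful expansion
`f i = σ (σ⁻¹ i + (-1)^(p (σ⁻¹ i)) * γ (σ⁻¹ i))`. -/
theorem stmt_1 (n : ℕ) (hn : 0 < n) (f : Fin n → Fin n) :
    (∃ σ : Equiv.Perm (Fin n),
        (Finset.image (fun i : Fin n => ((σ (f i) : ℤ) - (σ i : ℤ)).natAbs)
          Finset.univ).card = n) ↔
    ∃ (σ γ : Equiv.Perm (Fin n)) (p : Fin n → Fin 2),
      ∀ i : Fin n,
        (σ.symm (f i) : ℤ) =
          (σ.symm i : ℤ) + (-1 : ℤ) ^ (p (σ.symm i) : ℕ) * (γ (σ.symm i) : ℤ) := by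
  constructor
  · rintro ⟨σ, hσ⟩
    have hinj : Function.Injective
        (fun i : Fin n => ((σ (f i) : ℤ) - (σ i : ℤ)).natAbs) := by
      have h0 : (Finset.univ : Finset (Fin n)).card = n := by simp
      have := Finset.injOn_of_card_image_eq (f := fun i : Fin n =>
        ((σ (f i) : ℤ) - (σ i : ℤ)).natAbs) (s := Finset.univ) (by rw [hσ, h0])
      intro a b hab
      exact this (Finset.mem_univ a) (Finset.mem_univ b) hab
    have hlt : ∀ i : Fin n, ((σ (f i) : ℤ) - (σ i : ℤ)).natAbs < n := by
      intro i
      have h1 := (σ (f i)).isLt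
      have h2 := (σ i).isLt
      omega
    set g : Fin n → Fin n := fun i => ⟨((σ (f i) : ℤ) - (σ i : ℤ)).natAbs, hlt i⟩
      with hg
    have hginj : Function.Injective g := by
      intro a b hab
      apply hinj
      exact congrArg Fin.val hab
    have hgbij : Function.Bijective g := Finite.injective_iff_bijective.mp hginj
    refine ⟨σ.symm, σ.symm.trans (Equiv.ofBijective g hgbij),
      fun j => if (j : ℤ) ≤ (σ (f (σ.symm j)) : ℤ) then 0 else 1, fun i => ?_⟩
    simp only [Equiv.symm_symm, Equiv.trans_apply, Equiv.symm_apply_apply,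
      Equiv.ofBijective_apply, Equiv.symm_apply_apply]
    by_cases hc : ((σ i : ℤ)) ≤ (σ (f i) : ℤ)
    · simp only [hg, if_pos hc, Fin.val_zero, pow_zero, one_mul]
      omega
    · simp only [hg, if_neg hc, Fin.val_one, pow_one, neg_one_mul]
      omega
  · rintro ⟨σ, γ, p, h⟩
    refine ⟨σ.symm, ?_⟩
    have key : (fun i : Fin n => ((σ.symm (f i) : ℤ) - (σ.symm i : ℤ)).natAbs)
        = fun i : Fin n => (γ (σ.symm i) : ℕ) := by
      funext i
      have hi := h i
      have hk : (p (σ.symm i) : ℕ) = 0 ∨ (p (σ.symm i) : ℕ) = 1 := by omega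
      rcases hk with hk | hk <;> rw [hk] at hi <;> simp at hi <;> omega
    have hinj2 : Function.Injective (fun i : Fin n => (γ (σ.symm i) : ℕ)) :=
      fun a b hab => σ.symm.injective (γ.injective (Fin.val_injective hab))
    rw [key, Finset.card_image_of_injective _ hinj2]
    simp
end

section
/- For every integer n > 2, the number of permutations γ of Fin n with γ(0) = 0 such that for every i ≠ 0 at least one of i - γ(i) and i + γ(i) lies in {0, ..., n-1} (equivalently, γ(i) ≤ i or γ(i) < n - i for all i) equals ⌊(n-1)/2⌋! · ⌈(n-1)/2⌉!. -/
/-!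
Write `m = n - 1` and strip the fixed point `0`, so that `γ` becomes a permutation `e` of
`Fin m`. The condition at `i = x + 1` then reads `x ∉ [rev (e x), e x)`, so the inverse
permutation must send each `y` into the complement of the interval `[rev y, y)`. These
complements shrink as `y` grows, so the positions can be chosen greedily for
`y = m - 1, m - 2, …`: the `j`-th choice has `min (2j + 1) m` candidates of which `j` are
taken. Hence the count is `∏_{j < m} min (j + 1) (m - j) = ⌊m/2⌋! ⌈m/2⌉!`.
-/

open Finset Function Equiv Nat

section Injections

variable {α : Type*} [DecidableEq α]

theorem injective_cons_and_cons_mem_iff {N : ℕ} (B : Fin (N + 1) → Finset α) (p : α)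
    (g : Fin N → α) :
    (Injective (Fin.cons p g : Fin (N + 1) → α) ∧
        ∀ j, (Fin.cons p g : Fin (N + 1) → α) j ∈ B j) ↔
      p ∈ B 0 ∧ Injective g ∧ ∀ j, g j ∈ (B j.succ).erase p := by
  simp only [Fin.cons_injective_iff, Fin.forall_fin_succ, Fin.cons_zero, Fin.cons_succ,
    mem_erase, Set.mem_range, not_exists]
  constructor
  · rintro ⟨⟨hp, hg⟩, h0, hs⟩
    exact ⟨h0, hg, fun j => ⟨fun h => hp j h, hs j⟩⟩
  · rintro ⟨h0, hg, hs⟩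
    exact ⟨⟨fun j => (hs j).1, hg⟩, h0, fun j => (hs j).2⟩

variable [Fintype α]

theorem card_injective_mem_apply_zero_eq {N : ℕ} (B : Fin (N + 1) → Finset α) {p : α}
    (hp : p ∈ B 0) :
    #{f : Fin (N + 1) → α | (Injective f ∧ ∀ j, f j ∈ B j) ∧ f 0 = p} =
      #{g : Fin N → α | Injective g ∧ ∀ j, g j ∈ (B j.succ).erase p} := by
  refine card_nbij' Fin.tail (fun g => Fin.cons p g) ?_ ?_ ?_ ?_
  · intro f hf
    simp only [coe_filter, mem_univ, true_and, Set.mem_ofPred_eq] at hf ⊢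
    obtain ⟨hf, rfl⟩ := hf
    rw [← Fin.cons_self_tail f, injective_cons_and_cons_mem_iff] at hf
    exact hf.2
  · intro g hg
    simp only [coe_filter, mem_univ, true_and, Set.mem_ofPred_eq, Fin.cons_zero, and_true] at hg ⊢
    exact (injective_cons_and_cons_mem_iff B p g).2 ⟨hp, hg⟩
  · intro f hf
    simp only [coe_filter, mem_univ, true_and, Set.mem_ofPred_eq] at hf
    rw [← hf.2]
    exact Fin.cons_self_tail f
  · intro g _
    exact Fin.tail_cons _ _

theorem card_injective_mem_of_monotone {N : ℕ} (B : Fin N → Finset α) (hB : Monotone B) :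
    #{f : Fin N → α | Injective f ∧ ∀ j, f j ∈ B j} = ∏ j, (#(B j) - j) := by
  induction N with
  | zero => simp [Subsingleton.elim _ (Fin.elim0 : Fin 0 → α), injective_of_subsingleton]
  | succ N ih =>
    have hB' (p : α) : Monotone fun j : Fin N => (B j.succ).erase p :=
      fun j k hjk => erase_subset_erase p (hB (Fin.succ_le_succ_iff.2 hjk))
    rw [card_eq_sum_card_fiberwise (f := fun f => f 0) (t := B 0)
      (fun f hf => (mem_filter.1 hf).2.2 0), Fin.prod_univ_succ]
    simp only [filter_filter]
    have hfactor : ∀ p ∈ B 0, ∏ j : Fin N, (#((B j.succ).erase p) - j) =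
        ∏ j : Fin N, (#(B j.succ) - j.succ) := fun p hp => prod_congr rfl fun j _ => by
      rw [card_erase_of_mem (hB (Fin.zero_le _) hp), Fin.val_succ, Nat.sub_sub, Nat.add_comm 1]
    rw [sum_congr rfl fun p hp => (card_injective_mem_apply_zero_eq B hp).trans
      ((ih _ (hB' p)).trans (hfactor p hp)), sum_const, smul_eq_mul, Fin.val_zero, Nat.sub_zero]

end Injections

theorem card_perm_mem_of_antitone {m : ℕ} (A : Fin m → Finset (Fin m)) (hA : Antitone A) :
    #{σ : Perm (Fin m) | ∀ y, σ y ∈ A y} = ∏ j : Fin m, (#(A j.rev) - j) := by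
  rw [← card_injective_mem_of_monotone (fun j => A j.rev) (hA.comp Fin.rev_anti)]
  refine card_bij (fun σ _ => ⇑σ ∘ Fin.rev) ?_ ?_ ?_
  · intro σ hσ
    simp only [mem_filter, mem_univ, true_and] at hσ ⊢
    exact ⟨σ.injective.comp Fin.rev_injective, fun j => hσ j.rev⟩
  · intro σ _ τ _ h
    exact Equiv.ext fun y => by simpa using congrFun h y.rev
  · intro f hf
    simp only [mem_filter, mem_univ, true_and] at hf
    refine ⟨Equiv.ofBijective (f ∘ Fin.rev) (hf.1.comp Fin.rev_injective).bijective_of_finite,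
      ?_, ?_⟩
    · simpa [mem_filter] using fun y : Fin m => hf.2 y.rev
    · funext j
      simp

theorem decomposeFin_symm_zero_snd {m : ℕ} {γ : Perm (Fin (m + 1))} (h0 : γ 0 = 0) :
    Perm.decomposeFin.symm (0, (Perm.decomposeFin γ).2) = γ := by
  have hfst : (Perm.decomposeFin γ).1 = γ 0 :=
    (Perm.decomposeFin_symm_apply_zero _ _).symm.trans (by rw [symm_apply_apply])
  rw [← h0, ← hfst]
  exact symm_apply_apply _ _

theorem card_perm_fixing_zero {m : ℕ} (P : Fin (m + 1) → Fin (m + 1) → Prop)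
    [DecidableRel P] :
    #{γ : Perm (Fin (m + 1)) | γ 0 = 0 ∧ ∀ i, i ≠ 0 → P i (γ i)} =
      #{e : Perm (Fin m) | ∀ x, P x.succ (e x).succ} := by
  symm
  refine card_nbij' (fun e => Perm.decomposeFin.symm (0, e)) (fun γ => (Perm.decomposeFin γ).2)
    ?_ ?_ (fun e _ => by simp) (fun γ hγ => decomposeFin_symm_zero_snd (mem_filter.1 hγ).2.1)
  · intro e he
    simp only [coe_filter, mem_univ, true_and, Set.mem_ofPred_eq] at he ⊢
    refine ⟨by simp, fun i hi => ?_⟩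
    obtain ⟨x, rfl⟩ := Fin.exists_succ_eq.2 hi
    simpa using he x
  · intro γ hγ
    simp only [coe_filter, mem_univ, true_and, Set.mem_ofPred_eq] at hγ ⊢
    intro x
    have hx := hγ.2 x.succ (Fin.succ_ne_zero x)
    rw [← decomposeFin_symm_zero_snd hγ.1] at hx
    simpa using hx

theorem card_perm_rel_inv {m : ℕ} (r : Fin m → Fin m → Prop) [DecidableRel r] :
    #{e : Perm (Fin m) | ∀ x, r x (e x)} = #{σ : Perm (Fin m) | ∀ y, r (σ y) y} := by
  refine card_nbij' (·⁻¹) (·⁻¹) ?_ ?_ (fun e _ => inv_inv e) (fun σ _ => inv_inv σ)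
  · intro e he
    simp only [coe_filter, mem_univ, true_and, Set.mem_ofPred_eq] at he ⊢
    intro y
    simpa using he (e⁻¹ y)
  · intro σ hσ
    simp only [coe_filter, mem_univ, true_and, Set.mem_ofPred_eq] at hσ ⊢
    intro x
    simpa using hσ (σ⁻¹ x)

theorem card_compl_Ico_rev {m : ℕ} (j : Fin m) : #(Ico j j.rev)ᶜ = m - (j.rev - j) := by
  rw [card_compl, Fintype.card_fin, Fin.card_Ico]

theorem antitone_compl_Ico_rev {m : ℕ} : Antitone fun y : Fin m => (Ico y.rev y)ᶜ :=
  fun _ _ h => compl_subset_compl.2 (Ico_subset_Ico (Fin.rev_le_rev.2 h) h)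

theorem sub_or_add_mem_range_succ_iff {m : ℕ} (x y : Fin m) :
    ((0 ≤ (x.succ : ℤ) - y.succ ∧ (x.succ : ℤ) - y.succ < ↑(m + 1)) ∨
      (0 ≤ (x.succ : ℤ) + y.succ ∧ (x.succ : ℤ) + y.succ < ↑(m + 1))) ↔
      x ∈ (Ico y.rev y)ᶜ := by
  simp only [mem_compl, mem_Ico, Fin.le_def, Fin.lt_def, Fin.val_rev, Fin.val_succ]
  omega

theorem prod_range_min_succ_sub (m : ℕ) :
    ∏ j ∈ range m, min (j + 1) (m - j) = (m / 2)! * (m - m / 2)! := by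
  nth_rw 1 [show m = m / 2 + (m - m / 2) by omega]
  rw [prod_range_add, ← prod_range_add_one_eq_factorial, ← prod_range_add_one_eq_factorial,
    ← prod_range_reflect (· + 1) (m - m / 2)]
  congr 1 <;> refine prod_congr rfl fun j hj => ?_ <;> rw [mem_range] at hj <;> omega

/-- the number of permutations `γ` of `Fin n` fixing `0` such that for all
`i ≠ 0` at least one of `i - γ i`, `i + γ i` lies in `{0, …, n-1}` equals
`⌊(n-1)/2⌋! * ⌈(n-1)/2⌉!`. -/
theorem stmt_2 (n : ℕ) (hn : 2 < n) :
    (Finset.univ.filter (fun γ : Equiv.Perm (Fin n) =>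
        γ ⟨0, by omega⟩ = ⟨0, by omega⟩ ∧
        ∀ i : Fin n, i ≠ ⟨0, by omega⟩ →
          ((0 ≤ (i : ℤ) - (γ i : ℤ) ∧ (i : ℤ) - (γ i : ℤ) < n) ∨
           (0 ≤ (i : ℤ) + (γ i : ℤ) ∧ (i : ℤ) + (γ i : ℤ) < n)))).card =
      Nat.factorial ((n - 1) / 2) * Nat.factorial (n / 2) := by
  obtain ⟨m, rfl⟩ : ∃ m, n = m + 1 := ⟨n - 1, by omega⟩
  calc _ = #{e : Perm (Fin m) | ∀ x, x ∈ (Ico (e x).rev (e x))ᶜ} := by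
        refine (card_perm_fixing_zero fun i v : Fin (m + 1) =>
          (0 ≤ (i : ℤ) - v ∧ (i : ℤ) - v < ↑(m + 1)) ∨
            (0 ≤ (i : ℤ) + v ∧ (i : ℤ) + v < ↑(m + 1))).trans ?_
        simp only [sub_or_add_mem_range_succ_iff]
    _ = #{σ : Perm (Fin m) | ∀ y, σ y ∈ (Ico y.rev y)ᶜ} :=
        card_perm_rel_inv (fun x y => x ∈ (Ico y.rev y)ᶜ)
    _ = ∏ j : Fin m, (#(Ico j j.rev)ᶜ - j) := by
        simpa only [Fin.rev_rev] using card_perm_mem_of_antitone _ antitone_compl_Ico_rev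
    _ = ∏ j ∈ range m, min (j + 1) (m - j) := by
        rw [← Fin.prod_univ_eq_prod_range]
        refine prod_congr rfl fun j _ => ?_
        rw [card_compl_Ico_rev, Fin.val_rev]
        omega
    _ = _ := by
        rw [prod_range_min_succ_sub, Nat.add_sub_cancel, show m - m / 2 = (m + 1) / 2 by omega]
end

section
/- For every n ≥ 1, the polynomial F(x) = Π_{i ∈ Fin n} (Σ_{j ∈ Fin n} x^((n+1)^|i-j|)) over ℤ has lowest-degree term x^n, i.e., the minimal exponent appearing is n and its coefficient is nonzero. -/
open Polynomial in
/-- the lowest-degree term of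
`F(x) = ∏_i ∑_j x^((n+1)^|i-j|)` is `x^n`. -/
theorem stmt_6 (n : ℕ) (hn : 1 ≤ n) :
    (∏ i : Fin n, ∑ j : Fin n,
        (Polynomial.X : Polynomial ℤ) ^ ((n + 1) ^ (((i : ℤ) - (j : ℤ)).natAbs))).coeff n
        ≠ 0 ∧
    ∀ k < n, (∏ i : Fin n, ∑ j : Fin n,
        (Polynomial.X : Polynomial ℤ) ^ ((n + 1) ^ (((i : ℤ) - (j : ℤ)).natAbs))).coeff k
        = 0 := by
  set E : Fin n → Fin n → ℕ := fun i j => (n + 1) ^ (((i : ℤ) - (j : ℤ)).natAbs) with hE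
  have hE1 : ∀ i j, 1 ≤ E i j := fun i j => Nat.one_le_pow _ _ (Nat.succ_pos n)
  set Q : Polynomial ℤ := ∏ i : Fin n, ∑ j : Fin n, (X : Polynomial ℤ) ^ (E i j - 1)
    with hQdef
  have key : (∏ i : Fin n, ∑ j : Fin n,
      (Polynomial.X : Polynomial ℤ) ^ (E i j)) = X ^ n * Q := by
    have : ∀ i : Fin n, (∑ j : Fin n, (X : Polynomial ℤ) ^ (E i j))
        = X * ∑ j : Fin n, (X : Polynomial ℤ) ^ (E i j - 1) := by
      intro i
      rw [Finset.mul_sum]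
      refine Finset.sum_congr rfl fun j _ => ?_
      rw [← pow_succ']
      congr 1
      have := hE1 i j
      omega
    rw [Finset.prod_congr rfl fun i _ => this i, Finset.prod_mul_distrib,
      Finset.prod_const, Finset.card_univ, Fintype.card_fin, hQdef]
  have hQ0 : Q.coeff 0 = 1 := by
    have h1 : Q.coeff 0 = ∏ i : Fin n, ∑ j : Fin n,
        ((X : Polynomial ℤ) ^ (E i j - 1)).coeff 0 := by
      simp only [hQdef, ← Polynomial.constantCoeff_apply, map_prod, map_sum]
    rw [h1]
    refine Finset.prod_eq_one fun i _ => ?_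
    have h2 : ∀ j : Fin n, ((X : Polynomial ℤ) ^ (E i j - 1)).coeff 0
        = if j = i then 1 else 0 := by
      intro j
      rw [Polynomial.coeff_X_pow]
      have hiff : E i j - 1 = 0 ↔ j = i := by
        rw [hE]
        simp only
        constructor
        · intro h
          have h2 : (n + 1) ^ (((i : ℤ) - (j : ℤ)).natAbs) = 1 := by
            have := hE1 i j
            rw [hE] at this; simp only at this; omega
          have hne : n + 1 ≠ 1 := by omega
          have habs : (((i : ℤ) - (j : ℤ)).natAbs) = 0 := by
            by_contra hne0
            have : 1 < (n + 1) ^ (((i : ℤ) - (j : ℤ)).natAbs) :=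
              Nat.one_lt_pow hne0 (by omega)
            omega
          have : (i : ℤ) = (j : ℤ) := by omega
          exact (Fin.ext (by exact_mod_cast this.symm))
        · rintro rfl
          simp
      rcases eq_or_ne (j : Fin n) i with h | h
      · simp [h, (hiff.mpr h).symm]
      · rw [if_neg, if_neg h]
        intro hc
        exact h (hiff.mp hc.symm)
    rw [Finset.sum_congr rfl fun j _ => h2 j, Finset.sum_ite_eq' Finset.univ i]
    simp
  rw [show (fun i j : Fin n => (n + 1) ^ (((i : ℤ) - (j : ℤ)).natAbs)) = E from rfl] at *
  constructor
  · rw [key]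
    have := Polynomial.coeff_X_pow_mul Q n 0
    rw [zero_add] at this
    rw [this, hQ0]
    exact one_ne_zero
  · intro k hk
    rw [key, mul_comm, Polynomial.coeff_mul_X_pow']
    rw [if_neg (not_le.2 hk)]
end

section
/- Let n ≥ 2 and let f : Fin n → Fin n satisfy |f^(n-1)(Fin n)| = 1, i.e., the (n-1)-fold iterate of f is constant (f is a functional tree). Then f has exactly one fixed point. -/
/-- a functional tree `f : Fin n → Fin n` (the `(n-1)`-fold iterate of `f`
is constant) has exactly one fixed point. -/
theorem stmt_12 (n : ℕ) (hn : 2 ≤ n) (f : Fin n → Fin n)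
    (hf : ∃ r : Fin n, ∀ i : Fin n, f^[n - 1] i = r) :
    ∃! x : Fin n, f x = x := by
  obtain ⟨r, hr⟩ := hf
  refine ⟨r, ?_, ?_⟩
  · show f r = r
    calc f r = f (f^[n-1] r) := by rw [hr r]
      _ = f^[n-1+1] r := (Function.iterate_succ_apply' f (n-1) r).symm
      _ = f^[n-1] (f r) := Function.iterate_succ_apply f (n-1) r
      _ = r := hr (f r)
  · intro x hx
    have : f^[n-1] x = x := Function.iterate_fixed hx (n-1)
    rw [hr x] at this
    exact this.symm
end

section
/- Let n ≥ 1 and let A be an (n+1) × (n+1) matrix over a commutative ring. Let L be the n × n matrix defined by L[i,j] = (Σ_{k} A[i,k]) · [i = j] − A[i,j] for i, j ∈ Fin n (the Laplacian-type matrix with row sums over all n+1 columns, restricted to the first n rows and columns). Then det(L) = Σ_f Π_{i ∈ Fin n} A[i, f(i)], where the sum ranges over all functions f : Fin (n+1) → Fin (n+1) fixing n and such that the image of the n-fold iterate f^(n) equals {n}. -/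
open Matrix Finset

namespace Stmt14Aux

variable {n : ℕ} {R : Type*} [CommRing R]

def Mg (R : Type*) [CommRing R] (n : ℕ) (g : Fin n → Fin (n + 1)) :
    Matrix (Fin n) (Fin n) R :=
  fun i j => (if i = j then 1 else 0) - (if j.castSucc = g i then 1 else 0)

def extg (n : ℕ) (g : Fin n → Fin (n + 1)) : Fin (n + 1) → Fin (n + 1) :=
  fun x => if h : x = Fin.last n then Fin.last n else g (x.castPred h)

lemma extg_last (g : Fin n → Fin (n + 1)) : extg n g (Fin.last n) = Fin.last n := by
  simp [extg]

lemma extg_castSucc (g : Fin n → Fin (n + 1)) (i : Fin n) :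
    extg n g i.castSucc = g i := by
  simp [extg, (Fin.castSucc_lt_last i).ne]

lemma extg_ne_last (g : Fin n → Fin (n + 1)) (x : Fin (n + 1)) (h : x ≠ Fin.last n) :
    extg n g x = g (x.castPred h) := by
  simp [extg, h]

lemma det_Mg_one (g : Fin n → Fin (n + 1))
    (hg : ∀ x : Fin (n + 1), (extg n g)^[n] x = Fin.last n) :
    (Mg R n g).det = 1 := by
  set f := extg n g with hf
  have hex : ∀ x : Fin (n + 1), ∃ k, f^[k] x = Fin.last n := fun x => ⟨n, hg x⟩
  set d : Fin (n + 1) → ℕ := fun x => Nat.find (hex x) with hd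
  have hspec : ∀ x, f^[d x] x = Fin.last n := fun x => Nat.find_spec (hex x)
  have hpos : ∀ x, x ≠ Fin.last n → 0 < d x := by
    intro x hx
    rcases Nat.eq_zero_or_pos (d x) with h | h
    · exact absurd (by simpa [h] using hspec x) hx
    · exact h
  have hlt : ∀ x, x ≠ Fin.last n → d (f x) < d x := by
    intro x hx
    have h1 : f^[d x - 1] (f x) = Fin.last n := by
      have := hspec x
      rwa [← Nat.succ_pred_eq_of_pos (hpos x hx), Function.iterate_succ_apply] at this
    have h2 : d (f x) ≤ d x - 1 := Nat.find_le h1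
    have h3 := hpos x hx
    omega
  set b : Fin n → ℕ := fun i => d i.castSucc with hb
  have hT : (Mg R n g)ᵀ.BlockTriangular b := by
    intro i j hij
    show Mg R n g j i = 0
    have h1 : j ≠ i := by rintro rfl; exact lt_irrefl _ hij
    have h2 : ¬ (i.castSucc = g j) := by
      intro h
      have : d (f j.castSucc) < d j.castSucc :=
        hlt _ (Fin.castSucc_lt_last j).ne
      rw [hf] at this
      rw [extg_castSucc, ← h] at this
      exact absurd hij (by simpa [hb] using this.not_gt)
    simp [Mg, h1, h2]
  have hdet : (Mg R n g).det = ((Mg R n g)ᵀ).det := (Matrix.det_transpose _).symm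
  rw [hdet, hT.det]
  refine Finset.prod_eq_one fun a _ => ?_
  have hblock : ((Mg R n g)ᵀ.toSquareBlock b a) = 1 := by
    ext ⟨i, hi⟩ ⟨j, hj⟩
    show Mg R n g j i = _
    by_cases hji : j = i
    · subst hji
      have h2 : ¬ (j.castSucc = g j) := by
        intro h
        have : d (f j.castSucc) < d j.castSucc := hlt _ (Fin.castSucc_lt_last j).ne
        rw [hf, extg_castSucc, ← h] at this
        exact lt_irrefl _ this
      simp [Mg, h2, Matrix.one_apply]
    · have h2 : ¬ (i.castSucc = g j) := by
        intro h
        have : d (f j.castSucc) < d j.castSucc := hlt _ (Fin.castSucc_lt_last j).ne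
        rw [hf, extg_castSucc, ← h] at this
        have : b i < b j := this
        rw [hi, hj] at this
        exact lt_irrefl _ this
      have : (⟨j, hj⟩ : {k // b k = a}) ≠ ⟨i, hi⟩ := by simpa using hji
      have hij : ¬ i = j := fun h => hji h.symm
      simp [Mg, hji, hij, h2, Matrix.one_apply, this]
  rw [hblock, Matrix.det_one]

lemma det_Mg_zero (hn : 1 ≤ n) (g : Fin n → Fin (n + 1))
    (hg : ¬ ∀ x : Fin (n + 1), (extg n g)^[n] x = Fin.last n) :
    (Mg R n g).det = 0 := by
  set f := extg n g with hf
  push_neg at hg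
  obtain ⟨x, hx⟩ := hg
  -- once an iterate hits `last`, it stays there
  have hstay : ∀ y : Fin (n + 1), ∀ m : ℕ, f^[m] y = Fin.last n → ∀ l, m ≤ l →
      f^[l] y = Fin.last n := by
    intro y m hm l hml
    obtain ⟨t, rfl⟩ := Nat.exists_eq_add_of_le hml
    rw [Nat.add_comm m t, Function.iterate_add_apply, hm]
    exact Function.iterate_fixed (extg_last g) t
  have hne : ∀ k ≤ n, f^[k] x ≠ Fin.last n := by
    intro k hk h
    exact hx (hstay x k h n hk)
  -- pigeonhole on the first n+1 iterates
  have hmaps : ∀ k ∈ Finset.range (n + 1),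
      f^[k] x ∈ (Finset.univ : Finset (Fin (n + 1))).erase (Fin.last n) := by
    intro k hk
    exact Finset.mem_erase.2 ⟨hne k (Nat.lt_succ_iff.1 (Finset.mem_range.1 hk)), Finset.mem_univ _⟩
  have hcard : ((Finset.univ : Finset (Fin (n + 1))).erase (Fin.last n)).card <
      (Finset.range (n + 1)).card := by
    rw [Finset.card_erase_of_mem (Finset.mem_univ _)]
    simp
  obtain ⟨a, ha, b, hb, hab, heq⟩ :=
    Finset.exists_ne_map_eq_of_card_lt_of_maps_to hcard hmaps
  -- WLOG a < b
  wlog hlt : a < b generalizing a b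
  · exact this b hb a ha hab.symm heq.symm (by omega)
  rw [Finset.mem_range] at ha hb
  set c := f^[a] x with hc
  set p := b - a with hp
  have hppos : 0 < p := by omega
  have hcyc : f^[p] c = c := by
    rw [hc, ← Function.iterate_add_apply, hp]
    rw [Nat.sub_add_cancel hlt.le]
    exact heq.symm
  have hcycmul : ∀ m, f^[m * p] c = c := by
    intro m
    induction m with
    | zero => simp
    | succ m ih => rw [Nat.succ_mul, Function.iterate_add_apply, hcyc, ih]
  have hcne : ∀ k, f^[k] c ≠ Fin.last n := by
    intro k h
    have hmod : f^[k % p] c = Fin.last n := by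
      have : f^[p * (k / p) + k % p] c = f^[k] c := by rw [Nat.div_add_mod]
      rw [← this] at h
      rwa [Nat.add_comm (p * (k / p)) (k % p), Function.iterate_add_apply, Nat.mul_comm p (k / p), hcycmul] at h
    have h2 : f^[k % p + a] x = Fin.last n := by
      rw [Function.iterate_add_apply]; exact hmod
    have h3 : k % p < p := Nat.mod_lt _ hppos
    exact hne (k % p + a) (by omega) h2
  -- the cycle and its projection to `Fin n`
  set C : Finset (Fin (n + 1)) := (Finset.range p).image (fun k => f^[k] c) with hC
  have hcC : c ∈ C := Finset.mem_image.2 ⟨0, Finset.mem_range.2 hppos, rfl⟩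
  have hCf : C.image f = C := by
    apply Finset.Subset.antisymm
    · intro y hy
      obtain ⟨z, hz, rfl⟩ := Finset.mem_image.1 hy
      obtain ⟨k, hk, rfl⟩ := Finset.mem_image.1 hz
      rw [Finset.mem_range] at hk
      rw [← Function.iterate_succ_apply' f k c]
      rcases eq_or_lt_of_le (Nat.succ_le_of_lt hk) with h | h
      · rw [h, hcyc]; exact hcC
      · exact Finset.mem_image.2 ⟨k + 1, Finset.mem_range.2 h, rfl⟩
    · intro y hy
      obtain ⟨k, hk, rfl⟩ := Finset.mem_image.1 hy
      rw [Finset.mem_range] at hk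
      rcases Nat.eq_zero_or_pos k with rfl | hk0
      · refine Finset.mem_image.2 ⟨f^[p-1] c, ?_, ?_⟩
        · exact Finset.mem_image.2 ⟨p - 1, Finset.mem_range.2 (by omega), rfl⟩
        · show f (f^[p-1] c) = f^[0] c
          rw [← Function.iterate_succ_apply' f (p-1) c, Nat.succ_eq_add_one,
            Nat.sub_add_cancel hppos]
          simpa using hcyc
      · refine Finset.mem_image.2 ⟨f^[k-1] c, ?_, ?_⟩
        · exact Finset.mem_image.2 ⟨k - 1, Finset.mem_range.2 (by omega), rfl⟩
        · show f (f^[k-1] c) = f^[k] c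
          rw [← Function.iterate_succ_apply' f (k-1) c, Nat.succ_eq_add_one,
            Nat.sub_add_cancel hk0]
  have hCne : ∀ y ∈ C, y ≠ Fin.last n := by
    intro y hy
    obtain ⟨k, _, rfl⟩ := Finset.mem_image.1 hy
    exact hcne k
  set q : Fin (n + 1) → Fin n :=
    fun y => if h : y = Fin.last n then ⟨0, hn⟩ else y.castPred h with hqdef
  have hq : ∀ (y : Fin (n + 1)) (h : y ≠ Fin.last n), (q y).castSucc = y := by
    intro y h
    simp [hqdef, h, Fin.castSucc_castPred]
  have hqcast : ∀ j : Fin n, q j.castSucc = j := by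
    intro j
    have h := (Fin.castSucc_lt_last j).ne
    simp [hqdef, h, Fin.castPred_castSucc]
  set C' : Finset (Fin n) := C.image q with hC'
  have hmem : ∀ j : Fin n, j ∈ C' ↔ j.castSucc ∈ C := by
    intro j
    constructor
    · intro hj
      obtain ⟨y, hy, rfl⟩ := Finset.mem_image.1 hj
      rw [hq y (hCne y hy)]; exact hy
    · intro hj
      exact Finset.mem_image.2 ⟨j.castSucc, hj, hqcast j⟩
  have hgf : ∀ j : Fin n, g j = f j.castSucc := fun j => (extg_castSucc g j).symm
  have hgC : ∀ j ∈ C', g j ∈ C := by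
    intro j hj
    rw [hgf, ← hCf]
    exact Finset.mem_image.2 ⟨j.castSucc, (hmem j).1 hj, rfl⟩
  set σ : Fin n → Fin n := fun j => q (g j) with hσ
  have hσC : ∀ j ∈ C', σ j ∈ C' := fun j hj => Finset.mem_image.2 ⟨g j, hgC j hj, rfl⟩
  have hσcast : ∀ j ∈ C', (σ j).castSucc = g j := fun j hj => hq _ (hCne _ (hgC j hj))
  have himg : C'.image σ = C' := by
    apply Finset.Subset.antisymm
    · intro y hy
      obtain ⟨z, hz, rfl⟩ := Finset.mem_image.1 hy
      exact hσC z hz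
    · intro j hj
      have h1 : j.castSucc ∈ C := (hmem j).1 hj
      rw [← hCf] at h1
      obtain ⟨y, hy, hfy⟩ := Finset.mem_image.1 h1
      refine Finset.mem_image.2 ⟨q y, Finset.mem_image.2 ⟨y, hy, rfl⟩, ?_⟩
      have : g (q y) = f y := by rw [hgf, hq y (hCne y hy)]
      rw [hσ]
      show q (g (q y)) = j
      rw [this, hfy, hqcast]
  have hσinj : Set.InjOn σ C' := Finset.injOn_of_card_image_eq (by rw [himg])
  set cvec : Fin n → R := fun k => if k ∈ C' then (1 : R) else 0 with hcvec
  have hrows : (∑ k : Fin n, cvec k • (Mg R n g) k) = 0 := by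
    funext j
    simp only [Finset.sum_apply, Pi.smul_apply, smul_eq_mul, Pi.zero_apply, hcvec,
      ite_mul, one_mul, zero_mul]
    rw [← Finset.sum_filter, Finset.filter_univ_mem]
    have hsplit : (∑ k ∈ C', Mg R n g k j) =
        (∑ k ∈ C', if k = j then (1 : R) else 0)
          - ∑ k ∈ C', if j.castSucc = g k then (1 : R) else 0 := by
      rw [← Finset.sum_sub_distrib]
      rfl
    rw [hsplit]
    have h1 : (∑ k ∈ C', if k = j then (1 : R) else 0) = if j ∈ C' then 1 else 0 :=
      Finset.sum_ite_eq' C' j (fun _ => (1 : R))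
    have h2 : (∑ k ∈ C', if j.castSucc = g k then (1 : R) else 0) =
        ∑ k ∈ C', if j = σ k then (1 : R) else 0 := by
      refine Finset.sum_congr rfl fun k hk => ?_
      congr 1
      refine propext ⟨fun h => ?_, fun h => ?_⟩
      · rw [hσ]
        show j = q (g k)
        rw [← h, hqcast]
      · rw [h, hσcast k hk]
    have h3 : (∑ k ∈ C', if j = σ k then (1 : R) else 0) = if j ∈ C' then 1 else 0 := by
      rw [← Finset.sum_image (f := fun y => if j = y then (1 : R) else 0) (fun x hx y hy h => hσinj hx hy h), himg]
      exact Finset.sum_ite_eq C' j (fun _ => (1 : R))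
    rw [h1, h2, h3, sub_self]
  have hj0 : q c ∈ C' := Finset.mem_image.2 ⟨c, hcC, rfl⟩
  have hdet := Matrix.det_updateRow_sum (Mg R n g) (q c) cvec
  rw [hrows] at hdet
  have h0 : ((Mg R n g).updateRow (q c) 0).det = 0 :=
    Matrix.det_eq_zero_of_row_eq_zero (q c) (by simp)
  rw [h0, hcvec] at hdet
  simp only [hj0, if_true, one_smul] at hdet
  exact hdet.symm

end Stmt14Aux

open Stmt14Aux in
/-- Tutte's directed matrix-tree theorem in functional form: the determinant
of the truncated Laplacian equals the weighted sum over functional trees rooted at `n`. -/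
theorem stmt_14 (n : ℕ) (hn : 1 ≤ n) (R : Type*) [CommRing R]
    (A : Matrix (Fin (n + 1)) (Fin (n + 1)) R) :
    (Matrix.det (fun i j : Fin n =>
        (if i = j then ∑ k : Fin (n + 1), A i.castSucc k else 0) -
          A i.castSucc j.castSucc)) =
      ∑ f ∈ Finset.univ.filter (fun f : Fin (n + 1) → Fin (n + 1) =>
          f (Fin.last n) = Fin.last n ∧ ∀ i : Fin (n + 1), f^[n] i = Fin.last n),
        ∏ i : Fin n, A i.castSucc (f i.castSucc) := by
  classical
  set v : Fin n → Fin (n + 1) → (Fin n → R) :=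
    fun i k j => (if i = j then 1 else 0) - (if j.castSucc = k then 1 else 0) with hv
  have h1 : (fun i j : Fin n =>
        (if i = j then ∑ k : Fin (n + 1), A i.castSucc k else 0) -
          A i.castSucc j.castSucc)
      = fun i => ∑ k : Fin (n + 1), A i.castSucc k • v i k := by
    funext i j
    simp only [hv, Finset.sum_apply, Pi.smul_apply, smul_eq_mul, mul_sub, mul_ite, mul_one,
      mul_zero, Finset.sum_sub_distrib]
    congr 1
    · by_cases h : i = j <;> simp [h]
    · rw [Finset.sum_ite_eq (Finset.univ : Finset (Fin (n + 1))) j.castSucc (A i.castSucc)]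
      simp
  have h2 : Matrix.det (fun i j : Fin n =>
        (if i = j then ∑ k : Fin (n + 1), A i.castSucc k else 0) -
          A i.castSucc j.castSucc)
      = ∑ r : Fin n → Fin (n + 1),
          (∏ i : Fin n, A i.castSucc (r i)) * (Mg R n r).det := by
    show Matrix.detRowAlternating _ = _
    rw [h1]
    rw [show (Matrix.detRowAlternating (fun i => ∑ k : Fin (n + 1), A i.castSucc k • v i k))
        = (Matrix.detRowAlternating :
            (Fin n → R) [⋀^Fin n]→ₗ[R] R).toMultilinearMap
          (fun i => ∑ k : Fin (n + 1), A i.castSucc k • v i k) from rfl,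
      (Matrix.detRowAlternating :
        (Fin n → R) [⋀^Fin n]→ₗ[R] R).toMultilinearMap.map_sum
      (g := fun (i : Fin n) (k : Fin (n + 1)) => A i.castSucc k • v i k)]
    refine Finset.sum_congr rfl fun r _ => ?_
    rw [MultilinearMap.map_smul_univ]
    rfl
  rw [h2]
  have h3 : ∀ r : Fin n → Fin (n + 1),
      (Mg R n r).det = if (∀ x : Fin (n + 1), (extg n r)^[n] x = Fin.last n) then 1 else 0 := by
    intro r
    split_ifs with h
    · exact det_Mg_one r h
    · exact det_Mg_zero hn r h
  calc
    ∑ r : Fin n → Fin (n + 1), (∏ i : Fin n, A i.castSucc (r i)) * (Mg R n r).det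
        = ∑ r ∈ Finset.univ.filter
            (fun r : Fin n → Fin (n + 1) =>
              ∀ x : Fin (n + 1), (extg n r)^[n] x = Fin.last n),
            ∏ i : Fin n, A i.castSucc (r i) := by
          rw [Finset.sum_filter]
          refine Finset.sum_congr rfl fun r _ => ?_
          rw [h3 r]
          by_cases h : ∀ x : Fin (n + 1), (extg n r)^[n] x = Fin.last n <;> simp [h]
    _ = _ := by
          refine Finset.sum_nbij' (fun r => extg n r) (fun f i => f i.castSucc) ?_ ?_ ?_ ?_ ?_
          · intro r hr
            rw [Finset.mem_filter] at hr ⊢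
            exact ⟨Finset.mem_univ _, extg_last r, hr.2⟩
          · intro f hf
            rw [Finset.mem_filter] at hf ⊢
            refine ⟨Finset.mem_univ _, ?_⟩
            have hext : extg n (fun i => f i.castSucc) = f := by
              funext x
              by_cases h : x = Fin.last n
              · rw [h, extg_last, hf.2.1]
              · rw [extg_ne_last _ x h]
                exact congrArg f (Fin.castSucc_castPred x h)
            rw [hext]
            exact hf.2.2
          · intro r _
            funext i
            exact extg_castSucc r i
          · intro f hf
            rw [Finset.mem_filter] at hf
            funext x
            show extg n (fun i => f i.castSucc) x = f x
            by_cases h : x = Fin.last n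
            · rw [h]
              exact (extg_last _).trans hf.2.1.symm
            · rw [extg_ne_last _ x h]
              exact congrArg f (Fin.castSucc_castPred x h)
          · intro r _
            refine Finset.prod_congr rfl fun i _ => ?_
            exact congrArg (A i.castSucc) (extg_castSucc r i).symm
end

section
/- Let n ≥ 1 and X the n × n matrix over ℤ[x] with X[i,j] = x^(n^|i-j|). Then Σ_{f functional tree} Π_{i ∈ Fin n} X[i, f(i)] = Σ_{r ∈ Fin n} X[r,r] · det(M_r), where M_r is the (n-1) × (n-1) matrix obtained from diag(X·1) − X by deleting row and column r, and the sum on the left ranges over f : Fin n → Fin n with |f^(n-1)(Fin n)| = 1. -/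
/-! Split the functional trees by their root `r`. For fixed `r`, row `i` of the reduced
Laplacian is `∑ k, w i k • (e i - e k)`, where `e k` is the unit vector of `k` once row and
column `r` are deleted and `e r = 0`. By multilinearity its determinant is the sum, over maps `f`
fixing `r`, of `∏_{i ≠ r} w i (f i) * det (1 - P_f)`, where `P_f` is the 0/1 matrix of `f` with
row and column `r` deleted. If `f` is a tree rooted at `r` then `P_f` is nilpotent and
`det (1 - P_f) = 1`; otherwise `f` has a periodic point other than `r`, and the indicator of those
periodic points is a left kernel vector of `1 - P_f`, so `det (1 - P_f) = 0`. -/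

open Finset Matrix Function

def funMatrix (R : Type*) [Zero R] [One R] {α : Type*} [DecidableEq α] (f : α → α) :
    Matrix α α R :=
  of fun i j => if f i = j then 1 else 0

theorem Function.IsFixedPt.of_iterate_eq_const {α : Type*} {f : α → α} {n : ℕ} {r : α}
    (h : ∀ i, f^[n] i = r) : IsFixedPt f r := by
  have := iterate_succ_apply' f n r
  rw [iterate_succ_apply, h, h] at this
  exact this.symm

theorem Function.iterate_mem_periodicPts_of_card_le {α : Type*} [Fintype α] (f : α → α)
    (x : α) {n : ℕ} (hn : Fintype.card α ≤ n + 1) : f^[n] x ∈ periodicPts f := by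
  obtain ⟨a, b, hab, hne⟩ : ∃ a b : Fin (n + 2), f^[a] x = f^[b] x ∧ a ≠ b := by
    obtain ⟨a, b, hne, hab⟩ :=
      Fintype.exists_ne_map_eq_of_card_lt (fun t : Fin (n + 2) => f^[t] x) (by simp; omega)
    exact ⟨a, b, hab, hne⟩
  wlog hlt : a < b generalizing a b
  · exact this b a hab.symm hne.symm (lt_of_le_of_ne (not_lt.mp hlt) hne.symm)
  have hper : IsPeriodicPt f (b - a) (f^[a] x) := by
    rw [IsPeriodicPt, IsFixedPt, ← iterate_add_apply, Nat.sub_add_cancel hlt.le, hab]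
  have hsplit : f^[n] x = f^[n - a] (f^[a] x) := by
    rw [← iterate_add_apply, Nat.sub_add_cancel (by omega)]
  rw [hsplit]
  exact mk_mem_periodicPts (by omega) (hper.apply_iterate _)

theorem vecMul_funMatrix_indicator_periodicPts {R : Type*} [Semiring R] {α : Type*} [Fintype α]
    [DecidableEq α] (f : α → α) :
    (periodicPts f).indicator 1 ᵥ* funMatrix R f = (periodicPts f).indicator 1 := by
  classical
  funext y
  simp only [vecMul, dotProduct, funMatrix, of_apply, Set.indicator_apply, Pi.one_apply, mul_ite,
    mul_one, mul_zero]
  by_cases hy : y ∈ periodicPts f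
  · obtain ⟨z, hz, rfl⟩ := (bijOn_periodicPts f).surjOn hy
    rw [Fintype.sum_eq_single z, if_pos rfl, if_pos hz, if_pos hy]
    intro x hxz
    rw [ite_eq_right_iff]
    intro hfx
    rw [if_neg]
    exact fun hx => hxz ((bijOn_periodicPts f).injOn hx hz hfx)
  · rw [if_neg hy]
    refine Fintype.sum_eq_zero _ fun x => ?_
    rw [ite_eq_right_iff]
    rintro rfl
    rw [if_neg fun hx => hy ((bijOn_periodicPts f).mapsTo hx)]

theorem det_one_sub_eq_one_of_isNilpotent {R : Type*} [CommRing R] [IsReduced R] {n : Type*}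
    [Fintype n] [DecidableEq n] {N : Matrix n n R} (hN : IsNilpotent N) : (1 - N).det = 1 := by
  have h := (isNilpotent_charpoly_sub_pow_of_isNilpotent hN).map (Polynomial.evalRingHom 1)
  simp only [map_sub, map_pow, Polynomial.coe_evalRingHom, eval_charpoly, Polynomial.eval_X,
    one_pow, map_one] at h
  exact sub_eq_zero.mp h.eq_zero

section FunMatrix

variable {R : Type*} {m : ℕ} {r : Fin (m + 1)} {f : Fin (m + 1) → Fin (m + 1)}

theorem funMatrix_submatrix_succAbove_mul [Semiring R] (g : Fin (m + 1) → Fin (m + 1))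
    (hf : f r = r) :
    (funMatrix R g).submatrix r.succAbove r.succAbove *
        (funMatrix R f).submatrix r.succAbove r.succAbove =
      (funMatrix R (f ∘ g)).submatrix r.succAbove r.succAbove := by
  ext i j
  have hsum := Fin.sum_univ_succAbove
    (fun x => if g (r.succAbove i) = x then (if f x = r.succAbove j then 1 else 0 : R) else 0) r
  simp only [Fintype.sum_ite_eq, hf, Fin.ne_succAbove, if_false, ite_self, zero_add] at hsum
  simp only [funMatrix, mul_apply, submatrix_apply, of_apply, ite_mul, one_mul, zero_mul,
    Function.comp_apply]
  exact hsum.symm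

theorem funMatrix_submatrix_succAbove_pow [Semiring R] (hf : f r = r) (k : ℕ) :
    ((funMatrix R f).submatrix r.succAbove r.succAbove) ^ k =
      (funMatrix R f^[k]).submatrix r.succAbove r.succAbove := by
  induction k with
  | zero => ext i j; simp [funMatrix, one_apply]
  | succ k ih =>
    rw [pow_succ, ih, funMatrix_submatrix_succAbove_mul _ hf, ← iterate_succ']

theorem isNilpotent_funMatrix_submatrix_succAbove [Semiring R] (htree : ∀ i, f^[m] i = r) :
    IsNilpotent ((funMatrix R f).submatrix r.succAbove r.succAbove) := by
  refine ⟨m, ?_⟩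
  rw [funMatrix_submatrix_succAbove_pow (IsFixedPt.of_iterate_eq_const htree)]
  ext i j
  simp [funMatrix, htree, Fin.ne_succAbove]

theorem vecMul_funMatrix_submatrix_succAbove_indicator_periodicPts [Semiring R]
    (hf : f r = r) :
    ((periodicPts f).indicator 1 ∘ r.succAbove) ᵥ*
        (funMatrix R f).submatrix r.succAbove r.succAbove =
      (periodicPts f).indicator 1 ∘ r.succAbove := by
  funext j
  have hfull := congrFun (vecMul_funMatrix_indicator_periodicPts (R := R) f) (r.succAbove j)
  rw [vecMul, dotProduct, Fin.sum_univ_succAbove _ r] at hfull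
  simpa [funMatrix, hf, Fin.ne_succAbove, vecMul, dotProduct] using hfull

theorem det_one_sub_funMatrix_submatrix_succAbove_eq_zero [CommRing R] [IsDomain R]
    (hf : f r = r) {q : Fin (m + 1)} (hqr : q ≠ r) (hq : q ∈ periodicPts f) :
    (1 - (funMatrix R f).submatrix r.succAbove r.succAbove).det = 0 := by
  refine exists_vecMul_eq_zero_iff.mp ⟨(periodicPts f).indicator 1 ∘ r.succAbove, ?_, ?_⟩
  · obtain ⟨i, rfl⟩ := Fin.exists_succAbove_eq hqr
    exact fun h => by simpa [hq] using congrFun h i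
  · rw [vecMul_sub, vecMul_one, vecMul_funMatrix_submatrix_succAbove_indicator_periodicPts hf,
      sub_self]

theorem det_one_sub_funMatrix_submatrix_succAbove [CommRing R] (hf : f r = r) :
    (1 - (funMatrix R f).submatrix r.succAbove r.succAbove).det =
      if ∀ i, f^[m] i = r then 1 else 0 := by
  -- The entries are integers; over `ℤ` both the nilpotent and the kernel-vector argument apply.
  have hint : (1 - (funMatrix ℤ f).submatrix r.succAbove r.succAbove).det =
      if ∀ i, f^[m] i = r then 1 else 0 := by
    split_ifs with htree
    · exact det_one_sub_eq_one_of_isNilpotent (isNilpotent_funMatrix_submatrix_succAbove htree)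
    · push Not at htree
      obtain ⟨i, hi⟩ := htree
      exact det_one_sub_funMatrix_submatrix_succAbove_eq_zero hf hi
        (iterate_mem_periodicPts_of_card_le f i (by simp))
  have hmap : (Int.castRingHom R).mapMatrix
      (1 - (funMatrix ℤ f).submatrix r.succAbove r.succAbove) =
        1 - (funMatrix R f).submatrix r.succAbove r.succAbove := by
    ext i j
    by_cases hij : i = j <;> simp [funMatrix, one_apply, hij, apply_ite (Int.cast : ℤ → R)]
  rw [← hmap, ← RingHom.map_det, hint]
  split_ifs <;> simp

end FunMatrix

theorem Matrix.det_of_sum_smul {R : Type*} [CommRing R] {n ι : Type*} [Fintype n]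
    [DecidableEq n] [Fintype ι] (c : n → ι → R) (v : n → ι → n → R) :
    (of fun i => ∑ k, c i k • v i k).det =
      ∑ σ : n → ι, (∏ i, c i (σ i)) * (of fun i => v i (σ i)).det := by
  classical
  calc (of fun i => ∑ k, c i k • v i k).det
      = detRowAlternating fun i => ∑ k, c i k • v i k := rfl
    _ = ∑ σ : n → ι, detRowAlternating fun i => c i (σ i) • v i (σ i) :=
      MultilinearMap.map_sum detRowAlternating.toMultilinearMap _
    _ = ∑ σ : n → ι, (∏ i, c i (σ i)) * (of fun i => v i (σ i)).det :=
      sum_congr rfl fun σ _ => MultilinearMap.map_smul_univ detRowAlternating.toMultilinearMap _ _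

def rootedFunctionalTrees {m : ℕ} (r : Fin (m + 1)) : Finset (Fin (m + 1) → Fin (m + 1)) :=
  univ.filter fun f => ∀ i, f^[m] i = r

theorem sum_rootedFunctionalTrees {M : Type*} [AddCommMonoid M] {m : ℕ} (r : Fin (m + 1))
    (g : (Fin (m + 1) → Fin (m + 1)) → M) :
    ∑ f ∈ rootedFunctionalTrees r, g f =
      ∑ κ : Fin m → Fin (m + 1),
        if ∀ i, (Fin.insertNth r r κ)^[m] i = r then g (Fin.insertNth r r κ) else 0 := by
  rw [rootedFunctionalTrees, sum_filter,
    ← (Fin.insertNthEquiv (fun _ => Fin (m + 1)) r).sum_comp, Fintype.sum_prod_type,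
    Fintype.sum_eq_single r]
  · rfl
  · intro a har
    refine Fintype.sum_eq_zero _ fun κ => if_neg fun htree => har ?_
    simpa using (IsFixedPt.of_iterate_eq_const htree).eq

theorem mul_det_laplacian_submatrix_succAbove {R : Type*} [CommRing R] {m : ℕ}
    (w : Matrix (Fin (m + 1)) (Fin (m + 1)) R) (r : Fin (m + 1)) :
    w r r * (((diagonal fun i => ∑ k, w i k) - w).submatrix r.succAbove r.succAbove).det =
      ∑ f ∈ rootedFunctionalTrees r, ∏ i, w i (f i) := by
  have hrows : ((diagonal fun i => ∑ k, w i k) - w).submatrix r.succAbove r.succAbove =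
      of fun i => ∑ k, w (r.succAbove i) k •
        fun j => (1 : Matrix (Fin m) (Fin m) R) i j - if k = r.succAbove j then 1 else 0 := by
    ext i j
    by_cases hij : i = j <;>
      simp [one_apply, hij, Finset.sum_apply, mul_sub, sum_sub_distrib]
  have hfun : ∀ κ : Fin m → Fin (m + 1),
      (of fun i j => (1 : Matrix (Fin m) (Fin m) R) i j - if κ i = r.succAbove j then 1 else 0) =
        1 - (funMatrix R (Fin.insertNth r r κ)).submatrix r.succAbove r.succAbove := by
    intro κ
    ext i j
    simp [funMatrix]
  have hprod : ∀ κ : Fin m → Fin (m + 1),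
      w r r * ∏ i, w (r.succAbove i) (κ i) =
        ∏ i, w i ((Fin.insertNth r r κ : Fin (m + 1) → Fin (m + 1)) i) := by
    intro κ
    rw [Fin.prod_univ_succAbove _ r]
    simp
  rw [hrows, det_of_sum_smul, mul_sum, sum_rootedFunctionalTrees]
  refine sum_congr rfl fun κ _ => ?_
  rw [hfun, det_one_sub_funMatrix_submatrix_succAbove (Fin.insertNth_apply_same _ _ _),
    ← mul_assoc, hprod, mul_ite, mul_one, mul_zero]

theorem pairwiseDisjoint_rootedFunctionalTrees (m : ℕ) :
    (Set.univ : Set (Fin (m + 1))).PairwiseDisjoint rootedFunctionalTrees := by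
  intro r₁ _ r₂ _ hne
  simp only [onFun, disjoint_left, rootedFunctionalTrees, mem_filter, mem_univ, true_and]
  exact fun f h₁ h₂ => hne ((h₁ 0).symm.trans (h₂ 0))

open Polynomial in
/-- all-minors matrix-tree identity for the functional-tree generating
function: with `n = m + 1 ≥ 1` and `X[i,j] = x^(n^|i-j|)`,
`∑_{f functional tree} ∏_i X[i, f i] = ∑_r X[r,r] · det M_r`. -/
theorem stmt_15 (m : ℕ) :
    (∑ f ∈ Finset.univ.filter (fun f : Fin (m + 1) → Fin (m + 1) =>
          ∃ r : Fin (m + 1), ∀ i : Fin (m + 1), f^[m] i = r),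
        ∏ i : Fin (m + 1),
          (Polynomial.X : Polynomial ℤ) ^ ((m + 1) ^ (((i : ℤ) - (f i : ℤ)).natAbs))) =
      ∑ r : Fin (m + 1),
        (Polynomial.X : Polynomial ℤ) ^ ((m + 1) ^ (((r : ℤ) - (r : ℤ)).natAbs)) *
          Matrix.det (fun i j : Fin m =>
            (if r.succAbove i = r.succAbove j then
                ∑ k : Fin (m + 1),
                  (Polynomial.X : Polynomial ℤ) ^
                    ((m + 1) ^ (((r.succAbove i : ℤ) - (k : ℤ)).natAbs))
              else 0) -
              (Polynomial.X : Polynomial ℤ) ^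
                ((m + 1) ^ (((r.succAbove i : ℤ) - (r.succAbove j : ℤ)).natAbs))) := by
  let X : Matrix (Fin (m + 1)) (Fin (m + 1)) (Polynomial ℤ) :=
    of fun a b => Polynomial.X ^ ((m + 1) ^ ((a : ℤ) - (b : ℤ)).natAbs)
  have htrees : univ.filter (fun f : Fin (m + 1) → Fin (m + 1) => ∃ r, ∀ i, f^[m] i = r) =
      univ.biUnion rootedFunctionalTrees := by
    ext f
    simp [rootedFunctionalTrees]
  rw [htrees, sum_biUnion (by simpa using pairwiseDisjoint_rootedFunctionalTrees m)]
  exact sum_congr rfl fun r _ => (mul_det_laplacian_submatrix_succAbove X r).symm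
end
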